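/- arXiv:1210.7620 — 2 statements merged into one kernel-verified Lean document; each statement's English description precedes it below -/
import Mathlib

section
/- Let j ≥ 1 and let μ be a Dyck path (a lattice path of up steps (1,1) and down steps (1,-1) from the x-axis back to the x-axis, remaining weakly above the x-axis) that avoids the factor (up·down)^j·up and is primitive (strictly above the x-axis except at its endpoints). Then the complement path μ^c (obtained by swapping up and down steps) contains the factor (up·down)^j·up if and only if μ contains the factor down·down·(up·down)^j·down. -/
/-- The forbidden pattern `(x x̄)^j x` (`true` = up step x, `false` = down step x̄). -/
def pat (j : ℕ) : List Bool := (List.replicate j [true, false]).flatten ++ [true]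

/-- The pattern `x̄ x̄ (x x̄)^j x̄`. -/
def pat' (j : ℕ) : List Bool :=
  [false, false] ++ (List.replicate j [true, false]).flatten ++ [false]

/-- The complement of a path, swapping up and down steps. -/
def comp (w : List Bool) : List Bool := w.map (fun b => !b)

/-- The height of the endpoint of a path. -/
def ht (w : List Bool) : ℤ := (w.count true : ℤ) - (w.count false : ℤ)

def A (j : ℕ) : List Bool := (List.replicate j [true, false]).flatten

lemma A_succ (j : ℕ) : A (j+1) = [true, false] ++ A j := by
  simp [A, List.replicate_succ]

lemma A_succ' (j : ℕ) : A (j+1) = A j ++ [true, false] := by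
  induction j with
  | zero => rfl
  | succ n ih =>
    calc A (n+2) = [true,false] ++ A (n+1) := A_succ _
      _ = [true,false] ++ (A n ++ [true,false]) := by rw [ih]
      _ = ([true,false] ++ A n) ++ [true,false] := by simp
      _ = A (n+1) ++ [true,false] := by rw [← A_succ]

lemma comp_comp (w : List Bool) : comp (comp w) = w := by
  simp [comp, List.map_map, Function.comp_def]

lemma comp_append (u v : List Bool) : comp (u ++ v) = comp u ++ comp v := by
  simp [comp]

lemma comp_pat (j : ℕ) : comp (pat j) = [false] ++ A j := by
  induction j with
  | zero => rfl
  | succ n ih =>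
    have h1 : pat (n+1) = [true, false] ++ pat n := by
      simp [pat, List.replicate_succ, A]
    rw [h1, comp_append, ih, A_succ]
    rfl

lemma ht_append (u v : List Bool) : ht (u ++ v) = ht u + ht v := by
  simp [ht, List.count_append]; ring

lemma ht_A (j : ℕ) : ht (A j) = 0 := by
  induction j with
  | zero => rfl
  | succ n ih => rw [A_succ, ht_append, ih]; rfl

lemma A_ne_nil (j : ℕ) (hj : 1 ≤ j) : A j ≠ [] := by
  cases j with
  | zero => omega
  | succ n => rw [A_succ]; simp

theorem stmt1 (j : ℕ) (hj : 1 ≤ j) (μ : List Bool)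
    (hdyck : ht μ = 0 ∧ ∀ p, p <+: μ → 0 ≤ ht p)
    (hprim : ∀ p, p <+: μ → p ≠ [] → p ≠ μ → 0 < ht p)
    (havoid : ¬ pat j <:+: μ) :
    pat j <:+: comp μ ↔ pat' j <:+: μ := by
  have key : pat j <:+: comp μ ↔ ([false] ++ A j) <:+: μ := by
    constructor
    · intro h
      have := h.map (fun b => !b)
      rw [show (comp μ).map (fun b => !b) = comp (comp μ) from rfl, comp_comp] at this
      rwa [show (pat j).map (fun b => !b) = comp (pat j) from rfl, comp_pat] at this
    · intro h
      have := h.map (fun b => !b)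
      rw [show ([false] ++ A j).map (fun b => !b) = comp ([false] ++ A j) from rfl] at this
      rwa [← comp_pat, comp_comp] at this
  rw [key]
  have hpat : pat j = A j ++ [true] := rfl
  have hpat' : pat' j = [false, false] ++ A j ++ [false] := rfl
  constructor
  · rintro ⟨a, b, hab⟩
    -- b must be false :: b'
    obtain ⟨b', rfl⟩ : ∃ b', b = false :: b' := by
      match b with
      | [] =>
        exfalso
        have hab' : (a ++ [false]) ++ A j = μ := by simpa using hab
        have hpre : (a ++ [false]) <+: μ := ⟨A j, hab'⟩
        have hne : a ++ [false] ≠ μ := by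
          intro h
          apply A_ne_nil j hj
          have h2 : (a ++ [false]) ++ A j = (a ++ [false]) ++ [] := by
            rw [List.append_nil]; exact hab'.trans h.symm
          exact List.append_cancel_left h2
        have hpos := hprim _ hpre (by simp) hne
        have hμ : ht μ = ht (a ++ [false]) + ht (A j) := by
          rw [← ht_append, hab']
        rw [ht_A, hdyck.1] at hμ
        omega
      | true :: b' =>
        exfalso
        apply havoid
        exact ⟨a ++ [false], b', by rw [hpat]; simpa using hab⟩
      | false :: b' => exact ⟨b', rfl⟩
    -- a must end with false
    rcases List.eq_nil_or_concat a with rfl | ⟨a', c, rfl⟩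
    · exfalso
      have hpre : [false] <+: μ := ⟨A j ++ (false :: b'), by simpa using hab⟩
      have := hdyck.2 _ hpre
      simp [ht] at this
    · cases c with
      | true =>
        exfalso
        apply havoid
        have hsw : [true, false] ++ A j = A j ++ [true, false] :=
          (A_succ j).symm.trans (A_succ' j)
        refine ⟨a', [false] ++ (false :: b'), ?_⟩
        rw [hpat]
        have h2 : a' ++ ([true, false] ++ A j) ++ (false :: b') = μ := by
          simpa using hab
        rw [hsw] at h2
        simpa using h2
      | false =>
        exact ⟨a', b', by rw [hpat']; simpa using hab⟩
  · intro h
    refine List.IsInfix.trans ?_ h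
    exact ⟨[false], [false], by rw [hpat']; simp⟩
end

section
/- For j ≥ 1, if a binary word ω with |ω|_0 ≤ |ω|_1 ends at ordinate 0 (i.e., |ω|_0 = |ω|_1) and avoids the factor (10)^j1 and does not end with the suffix (10)^j, then for every h with 1 ≤ h ≤ j the word ω·1·(10)^{h-1} also avoids the factor (10)^j1. -/
/-- `(10)^j`. -/
def alt (j : ℕ) : List Bool := (List.replicate j [true, false]).flatten

lemma pat_eq_alt (j : ℕ) : pat j = alt j ++ [true] := rfl

lemma alt_succ (j : ℕ) : alt (j+1) = true :: false :: alt j := by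
  simp [alt, List.replicate_succ]

lemma pat_succ (j : ℕ) : pat (j+1) = true :: false :: pat j := by
  simp [pat, List.replicate_succ]

lemma alt_length (j : ℕ) : (alt j).length = 2*j := by
  induction j with
  | zero => rfl
  | succ n ih => rw [alt_succ]; simp [ih]; ring

lemma pat_length (j : ℕ) : (pat j).length = 2*j+1 := by
  rw [pat_eq_alt]; simp [alt_length]

lemma alt_getElem? : ∀ (j i : ℕ), i < 2*j → (alt j)[i]? = some (decide (i % 2 = 0))
  | 0, i, h => by omega
  | j+1, 0, h => by simp [alt_succ]
  | j+1, 1, h => by simp [alt_succ]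
  | j+1, i+2, h => by
      rw [alt_succ]
      simp only [List.getElem?_cons_succ]
      rw [alt_getElem? j i (by omega)]
      have : (i+2) % 2 = i % 2 := by omega
      rw [this]

lemma pat_getElem? (j i : ℕ) (hi : i < 2*j+1) : (pat j)[i]? = some (decide (i % 2 = 0)) := by
  rw [pat_eq_alt]
  rcases lt_or_ge i (2*j) with h | h
  · rw [List.getElem?_append_left (by rw [alt_length]; omega)]
    exact alt_getElem? j i h
  · have hi2j : i = 2*j := by omega
    subst hi2j
    rw [List.getElem?_append_right (by rw [alt_length])]
    simp [alt_length, Nat.mul_mod_right]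

theorem stmt2 (j : ℕ) (hj : 1 ≤ j) (ω : List Bool)
    (hle : ω.count false ≤ ω.count true)
    (hzero : ω.count false = ω.count true)
    (havoid : ¬ pat j <:+: ω)
    (hsuf : ¬ alt j <:+ ω) :
    ∀ h, 1 ≤ h → h ≤ j →
      ¬ pat j <:+: ω ++ [true] ++ alt (h - 1) := by
  intro h h1 hhj H
  rw [List.append_assoc] at H
  obtain ⟨u, v, huv⟩ := H
  have hlen := congrArg List.length huv
  simp only [List.length_append, pat_length, alt_length, List.length_cons,
    List.length_nil] at hlen
  -- hlen : u.length + (2*j+1) + v.length = ω.length + (0 + 1 + 2*(h-1))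
  by_cases hcase : u.length + (2*j+1) ≤ ω.length
  · apply havoid
    have hpre : u ++ pat j <+: ω := by
      apply List.prefix_of_prefix_length_le (l₃ := ω ++ ([true] ++ alt (h-1)))
      · rw [← huv]
        simp [List.append_assoc]
      · exact List.prefix_append _ _
      · simpa [pat_length] using hcase
    exact ((List.suffix_append u (pat j)).isInfix).trans hpre.isInfix
  · push_neg at hcase
    have hu2 : u.length + 2 ≤ ω.length := by omega
    have hk2j : ω.length - u.length ≤ 2*j := by omega
    have huv' : u ++ (pat j ++ v) = ω ++ ([true] ++ alt (h-1)) := by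
      rw [← huv]; simp [List.append_assoc]
    have hpk : (pat j)[ω.length - u.length]? = some true := by
      have h0 := congrArg (fun l => l[ω.length]?) huv'
      rw [List.getElem?_append_right (by omega : u.length ≤ ω.length),
        List.getElem?_append_left (by rw [pat_length]; omega),
        List.getElem?_append_right (le_refl ω.length)] at h0
      simpa using h0
    have e1 : (ω.length - u.length) % 2 = 0 := by
      have := pat_getElem? j (ω.length - u.length) (by omega)
      rw [hpk] at this
      simpa using this.symm
    rcases eq_or_lt_of_le hk2j with hkeq | hklt
    · -- pattern ends exactly at the appended true: alt j is a suffix of ω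
      apply hsuf
      have heq : (u ++ alt j) ++ ([true] ++ v) = ω ++ ([true] ++ alt (h-1)) := by
        rw [← huv]
        simp [pat_eq_alt, List.append_assoc]
      have hlen2 : (u ++ alt j).length = ω.length := by
        simp [alt_length]; omega
      have := List.append_inj heq hlen2
      exact ⟨u, this.1⟩
    · -- the pattern would contain "11", impossible
      have hh2 : 2 ≤ h := by omega
      have hpk1 : (pat j)[ω.length - u.length + 1]? = some true := by
        have h0 := congrArg (fun l => l[ω.length + 1]?) huv'
        rw [List.getElem?_append_right (by omega : u.length ≤ ω.length + 1),
          List.getElem?_append_left (by rw [pat_length]; omega),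
          List.getElem?_append_right (by omega : ω.length ≤ ω.length + 1)] at h0
        have hsub1 : ω.length + 1 - u.length = ω.length - u.length + 1 := by omega
        have hsub2 : ω.length + 1 - ω.length = 1 := by omega
        rw [hsub1, hsub2] at h0
        rw [h0]
        show ([true] ++ alt (h-1))[1]? = some true
        rw [List.getElem?_append_right (by simp : ([true] : List Bool).length ≤ 1)]
        simpa using alt_getElem? (h-1) 0 (by omega)
      have e2 : (ω.length - u.length + 1) % 2 = 0 := by
        have := pat_getElem? j (ω.length - u.length + 1) (by omega)
        rw [hpk1] at this
        simpa using this.symm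
      omega
end
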